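/- Let μ ∈ [0,1) and M_k = Σ_{j=1}^{k} μ^{k-j} G̃_j with ‖G̃_j - ∇f(W_j)‖_F ≤ ε for all j and ‖∇f(W_j) - ∇f(W_k)‖_F ≤ L·η·γ·√C_m·(k-j) for all j ≤ k (iterates move at most η·γ·√C_m per step under L-smoothness). Then ‖(1-μ)·M_k - ∇f(W_k)‖_F ≤ ε + μ^k‖∇f(W_k)‖_F + L·η·γ·√C_m·μ/(1-μ). -/

import Mathlib

/-!
Since `(1 - μ) ∑_{j=1}^k μ^(k-j) = 1 - μ^k`, the error `(1 - μ) M_k - ∇f(W_k)` equals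
`(1 - μ) ∑_j μ^(k-j) (G̃_j - ∇f(W_k)) - μ^k ∇f(W_k)`. Each `G̃_j - ∇f(W_k)` has norm at most
`ε + D (k - j)` with `D = L η γ √C_m`, and `∑_{i<k} i μ^i ≤ μ / (1 - μ)²` bounds the accumulated drift.
-/

open Finset

theorem Finset.sum_Icc_one_sub_eq_sum_range {M : Type*} [AddCommMonoid M] (k : ℕ) (g : ℕ → M) :
    ∑ j ∈ Icc 1 k, g (k - j) = ∑ i ∈ range k, g i := by
  refine sum_nbij' (fun j => k - j) (fun i => k - i) ?_ ?_ ?_ ?_ ?_ <;>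
    intro a ha <;> simp_all [mem_Icc, mem_range] <;> omega

theorem one_sub_mul_sum_Icc_pow {R : Type*} [Ring R] (μ : R) (k : ℕ) :
    (1 - μ) * ∑ j ∈ Icc 1 k, μ ^ (k - j) = 1 - μ ^ k := by
  rw [sum_Icc_one_sub_eq_sum_range k (μ ^ ·), mul_neg_geom_sum]

theorem sum_range_mul_pow_le {μ : ℝ} (hμ0 : 0 ≤ μ) (hμ1 : μ < 1) (k : ℕ) :
    ∑ i ∈ range k, (i : ℝ) * μ ^ i ≤ μ / (1 - μ) ^ 2 :=
  sum_le_hasSum (L := SummationFilter.unconditional ℕ) _ (fun i _ => by positivity)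
    (hasSum_coe_mul_geometric_of_norm_lt_one (by rwa [Real.norm_eq_abs, abs_of_nonneg hμ0]))

theorem one_sub_smul_momentum_sub_eq {R E : Type*} [CommRing R] [AddCommGroup E] [Module R E]
    (μ : R) (G : ℕ → E) (x : E) (k : ℕ) :
    (1 - μ) • ∑ j ∈ Icc 1 k, μ ^ (k - j) • G j - x =
      (1 - μ) • ∑ j ∈ Icc 1 k, μ ^ (k - j) • (G j - x) - μ ^ k • x := by
  simp only [smul_sub, sum_sub_distrib, ← sum_smul, smul_smul, one_sub_mul_sum_Icc_pow,
    sub_smul, one_smul]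
  abel

section Momentum

variable {E : Type*} [SeminormedAddCommGroup E] [NormedSpace ℝ E]
  {μ ε D : ℝ} {G g : ℕ → E} {k : ℕ}

theorem norm_one_sub_smul_momentum_drift_le (hμ0 : 0 ≤ μ) (hμ1 : μ < 1) (hε : 0 ≤ ε)
    (hD : 0 ≤ D) (herr : ∀ j, ‖G j - g j‖ ≤ ε)
    (hdrift : ∀ j, j ≤ k → ‖g j - g k‖ ≤ D * ((k : ℝ) - j)) :
    ‖(1 - μ) • ∑ j ∈ Icc 1 k, μ ^ (k - j) • (G j - g k)‖ ≤ ε + D * μ / (1 - μ) := by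
  have h1μ : 0 < 1 - μ := by linarith
  have hterm : ∀ j ∈ Icc 1 k,
      ‖μ ^ (k - j) • (G j - g k)‖ ≤ ε * μ ^ (k - j) + D * (((k - j : ℕ) : ℝ) * μ ^ (k - j)) := by
    intro j hj
    have hjk : j ≤ k := (mem_Icc.mp hj).2
    have hGj : ‖G j - g k‖ ≤ ε + D * ((k - j : ℕ) : ℝ) := by
      rw [Nat.cast_sub hjk]
      exact (norm_sub_le_norm_sub_add_norm_sub _ _ _).trans (add_le_add (herr j) (hdrift j hjk))
    rw [norm_smul_of_nonneg (pow_nonneg hμ0 _)]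
    calc μ ^ (k - j) * ‖G j - g k‖ ≤ μ ^ (k - j) * (ε + D * ((k - j : ℕ) : ℝ)) :=
          mul_le_mul_of_nonneg_left hGj (by positivity)
      _ = _ := by ring
  calc ‖(1 - μ) • ∑ j ∈ Icc 1 k, μ ^ (k - j) • (G j - g k)‖
      ≤ (1 - μ) * ∑ j ∈ Icc 1 k, (ε * μ ^ (k - j) + D * (((k - j : ℕ) : ℝ) * μ ^ (k - j))) := by
        rw [norm_smul_of_nonneg h1μ.le]
        exact mul_le_mul_of_nonneg_left ((norm_sum_le _ _).trans (sum_le_sum hterm)) h1μ.le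
    _ = ε * (1 - μ ^ k) + (1 - μ) * D * ∑ i ∈ range k, (i : ℝ) * μ ^ i := by
        rw [sum_add_distrib, ← mul_sum, ← mul_sum,
          sum_Icc_one_sub_eq_sum_range k (fun i => (i : ℝ) * μ ^ i), ← one_sub_mul_sum_Icc_pow]
        ring
    _ ≤ ε * 1 + (1 - μ) * D * (μ / (1 - μ) ^ 2) := by
        gcongr
        · linarith [pow_nonneg hμ0 k]
        · exact sum_range_mul_pow_le hμ0 hμ1 k
    _ = ε + D * μ / (1 - μ) := by field_simp

theorem norm_one_sub_smul_momentum_sub_le (hμ0 : 0 ≤ μ) (hμ1 : μ < 1) (hε : 0 ≤ ε)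
    (hD : 0 ≤ D) (herr : ∀ j, ‖G j - g j‖ ≤ ε)
    (hdrift : ∀ j, j ≤ k → ‖g j - g k‖ ≤ D * ((k : ℝ) - j)) :
    ‖(1 - μ) • ∑ j ∈ Icc 1 k, μ ^ (k - j) • G j - g k‖ ≤
      ε + μ ^ k * ‖g k‖ + D * μ / (1 - μ) := by
  rw [one_sub_smul_momentum_sub_eq]
  calc _ ≤ ‖(1 - μ) • ∑ j ∈ Icc 1 k, μ ^ (k - j) • (G j - g k)‖ + ‖μ ^ k • g k‖ :=
        norm_sub_le _ _
    _ ≤ ε + D * μ / (1 - μ) + μ ^ k * ‖g k‖ := by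
        rw [norm_smul_of_nonneg (pow_nonneg hμ0 k)]
        gcongr
        exact norm_one_sub_smul_momentum_drift_le hμ0 hμ1 hε hD herr hdrift
    _ = ε + μ ^ k * ‖g k‖ + D * μ / (1 - μ) := by ring

end Momentum

/-- Momentum bias bound: the normalized momentum (1-μ)M_k tracks the true gradient. -/
theorem stmt_18 (m n : ℕ) (μ ε L η γ Cm : ℝ)
    (hμ0 : 0 ≤ μ) (hμ1 : μ < 1) (hε : 0 ≤ ε)
    (hL : 0 < L) (hη : 0 < η) (hγ : 0 < γ) (hCm : 0 < Cm)
    (f : EuclideanSpace ℝ (Fin m × Fin n) → ℝ)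
    (W Gt M : ℕ → EuclideanSpace ℝ (Fin m × Fin n))
    (hM : ∀ k, M k = ∑ j ∈ Finset.Icc 1 k, μ ^ (k - j) • Gt j)
    (herr : ∀ j, ‖Gt j - gradient f (W j)‖ ≤ ε)
    (hdrift : ∀ j k : ℕ, j ≤ k →
      ‖gradient f (W j) - gradient f (W k)‖ ≤ L * η * γ * Real.sqrt Cm * ((k : ℝ) - j))
    (k : ℕ) :
    ‖(1 - μ) • M k - gradient f (W k)‖ ≤
      ε + μ ^ k * ‖gradient f (W k)‖ + L * η * γ * Real.sqrt Cm * μ / (1 - μ) := by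
  rw [hM k]
  exact norm_one_sub_smul_momentum_sub_le hμ0 hμ1 hε (by positivity) herr (fun j => hdrift j k)
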